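/- arXiv:1607.06665 — 5 statements merged into one kernel-verified Lean document; each statement's English description precedes it below -/
import Mathlib

section
/- Let d_1, ..., d_n be rational numbers with sum 0 and |d_i| ≤ c for each i. Then there exists a permutation p of [n] such that every prefix sum satisfies |∑_{i=1}^{j} d_{p(i)}| ≤ c for all j. -/
lemma sum_filter_succ {n : ℕ} (f : Fin (n+1) → ℚ) (k : ℕ) :
    ∑ i ∈ Finset.univ.filter (fun i : Fin (n+1) => (i : ℕ) < k+1), f i
      = f 0 + ∑ x ∈ Finset.univ.filter (fun x : Fin n => (x : ℕ) < k), f x.succ := by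
  rw [Finset.sum_filter, Finset.sum_filter, Fin.sum_univ_succ]
  simp [Nat.succ_lt_succ_iff]

lemma aux (c : ℚ) (hc : 0 ≤ c) :
    ∀ n (d : Fin n → ℚ) (s : ℚ), |s| ≤ c → s + ∑ i, d i = 0 → (∀ i, |d i| ≤ c) →
    ∃ p : Equiv.Perm (Fin n), ∀ j : ℕ, j ≤ n →
      |s + ∑ i ∈ Finset.univ.filter (fun i : Fin n => (i : ℕ) < j), d (p i)| ≤ c := by
  intro n
  induction n with
  | zero =>
    intro d s hs _ _
    exact ⟨1, fun j _ => by simpa using hs⟩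
  | succ n ih =>
    intro d s hs hsum hbd
    have hsd : ∑ i, d i = -s := by linarith
    -- choose i₀
    have hex : ∃ i₀ : Fin (n+1), (s ≤ 0 ∧ 0 ≤ d i₀) ∨ (0 < s ∧ d i₀ ≤ 0) := by
      rcases le_or_gt s 0 with h | h
      · by_contra hcon
        push_neg at hcon
        have : ∀ i : Fin (n+1), d i < 0 := by
          intro i
          rcases hcon i with ⟨h1, _⟩
          exact h1 h
        have : ∑ i, d i < 0 := by
          have := Finset.sum_lt_sum_of_nonempty (s := (Finset.univ : Finset (Fin (n+1))))
            ⟨0, Finset.mem_univ 0⟩ (f := d) (g := fun _ => (0:ℚ)) (fun i _ => this i)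
          simpa using this
        rw [hsd] at this; linarith
      · by_contra hcon
        push_neg at hcon
        have : ∀ i : Fin (n+1), 0 < d i := by
          intro i
          rcases hcon i with ⟨_, h2⟩
          exact h2 h
        have : 0 < ∑ i, d i := by
          have := Finset.sum_lt_sum_of_nonempty (s := (Finset.univ : Finset (Fin (n+1))))
            ⟨0, Finset.mem_univ 0⟩ (f := fun _ => (0:ℚ)) (g := d) (fun i _ => this i)
          simpa using this
        rw [hsd] at this; linarith
    obtain ⟨i₀, hi₀⟩ := hex
    set s' : ℚ := s + d i₀ with hs'
    have habs : |s'| ≤ c := by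
      rw [abs_le] at hs ⊢
      have hb := (abs_le.1 (hbd i₀))
      rcases hi₀ with ⟨h1, h2⟩ | ⟨h1, h2⟩ <;>
        constructor <;> simp only [hs'] <;> linarith [hb.1, hb.2, hs.1, hs.2]
    set g : Fin n → ℚ := fun x => d (Equiv.swap 0 i₀ x.succ) with hg
    have hgsum : s' + ∑ x, g x = 0 := by
      have : ∑ i : Fin (n+1), d (Equiv.swap 0 i₀ i) = ∑ i, d i :=
        Equiv.sum_comp (Equiv.swap 0 i₀) d
      rw [Fin.sum_univ_succ] at this
      simp only [Equiv.swap_apply_left] at this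
      have : d i₀ + ∑ x, g x = -s := by rw [hg]; rw [this]; exact hsd
      simp only [hs']; linarith
    obtain ⟨σ, hσ⟩ := ih g s' habs hgsum (fun x => hbd _)
    refine ⟨Equiv.Perm.decomposeFin.symm (i₀, σ), ?_⟩
    intro j hj
    match j with
    | 0 => simpa using hs
    | (k+1) =>
      have hk : k ≤ n := Nat.succ_le_succ_iff.mp hj
      rw [sum_filter_succ (fun i => d (Equiv.Perm.decomposeFin.symm (i₀, σ) i)) k]
      simp only [Equiv.Perm.decomposeFin_symm_apply_zero,
        Equiv.Perm.decomposeFin_symm_apply_succ]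
      have := hσ k hk
      simp only [hg] at this
      calc |s + (d i₀ + ∑ x ∈ Finset.univ.filter (fun x : Fin n => (x:ℕ) < k),
              d (Equiv.swap 0 i₀ (σ x).succ))|
          = |s' + ∑ x ∈ Finset.univ.filter (fun x : Fin n => (x:ℕ) < k),
              d (Equiv.swap 0 i₀ (σ x).succ)| := by rw [hs']; ring_nf
        _ ≤ c := this

theorem stmt_0 (n : ℕ) (c : ℚ) (hc : 0 ≤ c) (d : Fin n → ℚ)
    (hsum : ∑ i, d i = 0) (hbd : ∀ i, |d i| ≤ c) :
    ∃ p : Equiv.Perm (Fin n), ∀ j : ℕ, j ≤ n →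
      |∑ i ∈ Finset.univ.filter (fun i : Fin n => (i : ℕ) < j), d (p i)| ≤ c := by
  obtain ⟨p, hp⟩ := aux c hc n d 0 (by simpa using hc) (by simpa using hsum) hbd
  exact ⟨p, fun j hj => by simpa using hp j hj⟩
end

section
/- Let (a_1,b_1), ..., (a_n,b_n) be pairs of nonnegative rationals with a_i + b_i ∈ [c', c] for each i, and let α ∈ [0,1] satisfy ∑ a_i = α · ∑ b_i. Then there exists a permutation p of [n] such that for all 1 ≤ j ≤ j' ≤ n, |∑_{i=j}^{j'} (a_{p(i)} − α · b_{p(i)})| ≤ 2c. -/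
/-!
Put `d i = a i - α * b i`. Then `|d i| ≤ a i + b i ≤ c` and `∑ i, d i = 0`. Order the `d i`
greedily: while the running sum `S` is `≤ 0` take next a remaining value `≥ 0`, otherwise one
`≤ 0`. Such a value exists because the remaining values sum to `-S`, and adding a value of the
opposite sign keeps `|S| ≤ c`. So every prefix sum lies in `[-c, c]`, and a window sum, being the
difference of two prefix sums, lies in `[-2c, 2c]`.
-/

open Finset

lemma abs_sub_mul_le_add {R : Type*} [CommRing R] [LinearOrder R] [IsStrictOrderedRing R]
    {a b t : R} (ha : 0 ≤ a) (hb : 0 ≤ b) (ht₀ : 0 ≤ t) (ht₁ : t ≤ 1) : |a - t * b| ≤ a + b := by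
  rw [abs_le]
  constructor <;> nlinarith [mul_nonneg ht₀ hb, mul_le_of_le_one_left hb ht₁]

lemma List.Perm.exists_eq_ofFn_comp {β : Type*} {l : List β} {n : ℕ} {g : Fin n → β}
    (h : l.Perm (List.ofFn g)) : ∃ σ : Equiv.Perm (Fin n), l = List.ofFn (g ∘ σ) := by
  induction l generalizing n with
  | nil =>
    obtain rfl : n = 0 := by simpa using h.length_eq.symm
    exact ⟨1, by simp⟩
  | cons x t ih =>
    obtain ⟨m, rfl⟩ : ∃ m, n = m + 1 := ⟨t.length, by simpa using h.length_eq.symm⟩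
    obtain ⟨k, rfl⟩ := List.mem_ofFn.1 (h.subset List.mem_cons_self)
    have hswap := (Equiv.Perm.ofFn_comp_perm (Equiv.swap 0 k) g).symm
    rw [List.ofFn_succ (f := g ∘ _)] at hswap
    obtain ⟨τ, hτ⟩ := ih (by simpa using (h.trans hswap).cons_inv)
    refine ⟨Equiv.Perm.decomposeFin.symm (k, τ), ?_⟩
    rw [List.ofFn_succ, hτ]
    simp [Function.comp_def]

lemma Fin.sum_filter_le_and_le_eq_sub {M : Type*} [AddCommGroup M] {n : ℕ} (f : Fin n → M)
    {j j' : Fin n} (h : j ≤ j') :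
    ∑ i with j ≤ i ∧ i ≤ j', f i =
      ∑ i with i.val < j'.val + 1, f i - ∑ i with i.val < j.val, f i := by
  rw [eq_sub_iff_add_eq, ← sum_union]
  · congr 1
    ext i
    simp only [mem_union, mem_filter, mem_univ, true_and, Fin.le_def] at h ⊢
    omega
  · rw [disjoint_filter]
    intro i _ hi hi'
    rw [Fin.le_def] at hi
    omega

section OrderedAddCommGroup

variable {α : Type*} [AddCommGroup α] [LinearOrder α] [IsOrderedAddMonoid α] {c : α}

lemma abs_add_le_of_nonpos_of_nonneg {x y : α} (hx : |x| ≤ c) (hy : |y| ≤ c) (hx₀ : x ≤ 0)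
    (hy₀ : 0 ≤ y) : |x + y| ≤ c :=
  abs_le.2 ⟨(neg_le_of_abs_le hx).trans (le_add_of_nonneg_right hy₀),
    (add_le_of_nonpos_left hx₀).trans (le_of_abs_le hy)⟩

lemma List.exists_mem_abs_add_le {l : List α} {S : α} (hl : l ≠ []) (hlc : ∀ x ∈ l, |x| ≤ c)
    (hS : |S| ≤ c) (hsum : S + l.sum = 0) : ∃ x ∈ l, |S + x| ≤ c := by
  have hl_sum : l.sum = -S := eq_neg_of_add_eq_zero_right hsum
  rcases le_total S 0 with hS₀ | hS₀
  · obtain ⟨x, hx, hx₀⟩ := l.exists_le_of_sum_le hl (fun _ => 0) id (by simpa [hl_sum] using hS₀)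
    exact ⟨x, hx, abs_add_le_of_nonpos_of_nonneg hS (hlc x hx) hS₀ hx₀⟩
  · obtain ⟨x, hx, hx₀⟩ := l.exists_le_of_sum_le hl id (fun _ => 0) (by simpa [hl_sum] using hS₀)
    exact ⟨x, hx, add_comm x S ▸ abs_add_le_of_nonpos_of_nonneg (hlc x hx) hS hx₀ hS₀⟩

lemma List.exists_perm_abs_add_sum_take_le (l : List α) (hlc : ∀ x ∈ l, |x| ≤ c) {S : α}
    (hS : |S| ≤ c) (hsum : S + l.sum = 0) :
    ∃ l' : List α, l'.Perm l ∧ ∀ k, |S + (l'.take k).sum| ≤ c := by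
  induction h : l.length generalizing l S with
  | zero =>
    obtain rfl := List.length_eq_zero_iff.1 h
    exact ⟨[], List.Perm.refl _, fun k => by simpa using hS⟩
  | succ m ih =>
    obtain ⟨x, hx, hSx⟩ :=
      l.exists_mem_abs_add_le (List.ne_nil_of_length_eq_add_one h) hlc hS hsum
    have hperm : l.Perm (x :: l.erase x) := List.perm_cons_erase hx
    obtain ⟨l', hl', hprefix⟩ := ih (l.erase x) (fun y hy => hlc y (List.mem_of_mem_erase hy)) hSx
      (by rw [add_assoc, ← List.sum_cons, ← hperm.sum_eq, hsum])
      (by rw [List.length_erase_of_mem hx, h, Nat.add_sub_cancel])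
    refine ⟨x :: l', (hl'.cons x).trans hperm.symm, ?_⟩
    rintro (_ | k)
    · simpa using hS
    · simpa [add_assoc] using hprefix k

theorem Fin.exists_perm_abs_sum_filter_lt_le {n : ℕ} (d : Fin n → α) (hd : ∀ i, |d i| ≤ c)
    (hc : 0 ≤ c) (hsum : ∑ i, d i = 0) :
    ∃ σ : Equiv.Perm (Fin n), ∀ k : ℕ, |∑ i with i.val < k, d (σ i)| ≤ c := by
  obtain ⟨l, hl, hprefix⟩ := (List.ofFn d).exists_perm_abs_add_sum_take_le (by simpa using hd)
    (S := 0) (by simpa using hc) (by simpa [List.sum_ofFn] using hsum)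
  obtain ⟨σ, rfl⟩ := hl.exists_eq_ofFn_comp
  exact ⟨σ, fun k => by simpa [List.sum_take_ofFn] using hprefix k⟩

theorem Fin.exists_perm_abs_window_sum_le {n : ℕ} (d : Fin n → α) (hd : ∀ i, |d i| ≤ c)
    (hsum : ∑ i, d i = 0) :
    ∃ σ : Equiv.Perm (Fin n), ∀ j j' : Fin n, j ≤ j' →
      |∑ i with j ≤ i ∧ i ≤ j', d (σ i)| ≤ c + c := by
  rcases isEmpty_or_nonempty (Fin n) with _ | ⟨⟨i₀⟩⟩
  · exact ⟨1, fun j => isEmptyElim j⟩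
  obtain ⟨σ, hσ⟩ := exists_perm_abs_sum_filter_lt_le d hd ((abs_nonneg _).trans (hd i₀)) hsum
  refine ⟨σ, fun j j' h => ?_⟩
  rw [sum_filter_le_and_le_eq_sub _ h]
  exact (abs_sub _ _).trans (add_le_add (hσ _) (hσ _))

end OrderedAddCommGroup

theorem stmt_2_general (n : ℕ) (c c' : ℚ)
    (a b : Fin n → ℚ) (ha : ∀ i, 0 ≤ a i) (hb : ∀ i, 0 ≤ b i)
    (hab : ∀ i, a i + b i ∈ Set.Icc c' c)
    (α : ℚ) (hα0 : 0 ≤ α) (hα1 : α ≤ 1)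
    (hsum : ∑ i, a i = α * ∑ i, b i) :
    ∃ p : Equiv.Perm (Fin n), ∀ j j' : Fin n, j ≤ j' →
      |∑ i ∈ Finset.univ.filter (fun i : Fin n => j ≤ i ∧ i ≤ j'),
        (a (p i) - α * b (p i))| ≤ 2 * c := by
  have hd : ∀ i, |a i - α * b i| ≤ c := fun i =>
    (abs_sub_mul_le_add (ha i) (hb i) hα0 hα1).trans (hab i).2
  have hd_sum : ∑ i, (a i - α * b i) = 0 := by
    rw [sum_sub_distrib, ← mul_sum, hsum, sub_self]
  obtain ⟨σ, hσ⟩ := Fin.exists_perm_abs_window_sum_le _ hd hd_sum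
  exact ⟨σ, fun j j' h => (hσ j j' h).trans_eq (two_mul c).symm⟩

theorem stmt_2 (n : ℕ) (c c' : ℚ) (hc' : 0 < c') (hcc : c' ≤ c)
    (a b : Fin n → ℚ) (ha : ∀ i, 0 ≤ a i) (hb : ∀ i, 0 ≤ b i)
    (hab : ∀ i, a i + b i ∈ Set.Icc c' c)
    (α : ℚ) (hα0 : 0 ≤ α) (hα1 : α ≤ 1)
    (hsum : ∑ i, a i = α * ∑ i, b i) :
    ∃ p : Equiv.Perm (Fin n), ∀ j j' : Fin n, j ≤ j' →
      |∑ i ∈ Finset.univ.filter (fun i : Fin n => j ≤ i ∧ i ≤ j'),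
        (a (p i) - α * b (p i))| ≤ 2 * c :=
  stmt_2_general n c c' a b ha hb hab α hα0 hα1 hsum
end

section
/- Let U be a finite set, Z ⊆ U, and let S_1, ..., S_m be subsets of U ordered greedily so that for each j, S_j maximizes |S \setminus (Z ∪ S_1 ∪ ... ∪ S_{j−1})| over the remaining sets. Then for every j ∈ [m], |(S_1 ∪ ... ∪ S_j) \setminus Z| ≥ (j/m) · |(S_1 ∪ ... ∪ S_m) \setminus Z|. -/
private lemma aux_biUnion_eq {α : Type*} [DecidableEq α] {m : ℕ} (S : Fin m → Finset α)
    (Z : Finset α) (T : Finset (Fin m)) (hT : ∀ k ∈ T, ∀ l : Fin m, l ≤ k → l ∈ T) :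
    T.biUnion (fun k => S k \ (Z ∪ (Finset.univ.filter (fun ℓ : Fin m => ℓ < k)).biUnion S))
      = T.biUnion S \ Z := by
  ext x
  simp only [Finset.mem_biUnion, Finset.mem_sdiff, Finset.mem_union, Finset.mem_filter,
    Finset.mem_univ, true_and, not_or, not_exists, not_and]
  constructor
  · rintro ⟨k, hk, hxS, hxZ, -⟩
    exact ⟨⟨k, hk, hxS⟩, hxZ⟩
  · rintro ⟨⟨k, hk, hxS⟩, hxZ⟩
    classical
    obtain ⟨k0, hk0, hmin⟩ := Finset.exists_min_image (T.filter (fun k => x ∈ S k)) id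
      ⟨k, by simp [hk, hxS]⟩
    simp only [Finset.mem_filter] at hk0
    refine ⟨k0, hk0.1, hk0.2, hxZ, ?_⟩
    intro l hl hxl
    exact absurd hl (not_lt.mpr (hmin l (Finset.mem_filter.mpr ⟨hT k0 hk0.1 l hl.le, hxl⟩)))

private lemma aux_card_eq {α : Type*} [DecidableEq α] {m : ℕ} (S : Fin m → Finset α)
    (Z : Finset α) (T : Finset (Fin m)) (hT : ∀ k ∈ T, ∀ l : Fin m, l ≤ k → l ∈ T) :
    (T.biUnion S \ Z).card
      = ∑ k ∈ T, (S k \ (Z ∪ (Finset.univ.filter (fun ℓ : Fin m => ℓ < k)).biUnion S)).card := by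
  rw [← aux_biUnion_eq S Z T hT]
  apply Finset.card_biUnion
  intro k hk l hl hkl
  rcases hkl.lt_or_gt with h | h
  · refine Finset.disjoint_left.mpr ?_
    intro x hx hx'
    simp only [Finset.mem_sdiff, Finset.mem_union, Finset.mem_biUnion, Finset.mem_filter,
      Finset.mem_univ, true_and, not_or, not_exists, not_and] at hx hx'
    exact hx'.2.2 k h hx.1
  · refine Finset.disjoint_left.mpr ?_
    intro x hx hx'
    simp only [Finset.mem_sdiff, Finset.mem_union, Finset.mem_biUnion, Finset.mem_filter,
      Finset.mem_univ, true_and, not_or, not_exists, not_and] at hx hx'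
    exact hx.2.2 l h hx'.1

theorem stmt_6 {α : Type*} [DecidableEq α] (m : ℕ) (S : Fin m → Finset α) (Z : Finset α)
    (hgreedy : ∀ j k : Fin m, j ≤ k →
      ((S k) \ (Z ∪ (Finset.univ.filter (fun ℓ : Fin m => ℓ < j)).biUnion S)).card ≤
      ((S j) \ (Z ∪ (Finset.univ.filter (fun ℓ : Fin m => ℓ < j)).biUnion S)).card) :
    ∀ j : Fin m,
      (((Finset.univ.filter (fun ℓ : Fin m => ℓ ≤ j)).biUnion S \ Z).card : ℝ) ≥
      (((j : ℕ) + 1 : ℝ) / m) * ((Finset.univ.biUnion S \ Z).card : ℝ) := by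
  intro j
  have hm : 0 < m := j.pos
  set g : Fin m → ℕ :=
    fun k => (S k \ (Z ∪ (Finset.univ.filter (fun ℓ : Fin m => ℓ < k)).biUnion S)).card with hg
  -- g is non-increasing
  have hmono : ∀ a b : Fin m, a ≤ b → g b ≤ g a := by
    intro a b hab
    refine le_trans (Finset.card_le_card ?_) (hgreedy a b hab)
    apply Finset.sdiff_subset_sdiff le_rfl
    apply Finset.union_subset_union le_rfl
    apply Finset.biUnion_subset_biUnion_of_subset_left
    intro l
    simp only [Finset.mem_filter, Finset.mem_univ, true_and]
    exact fun h => lt_of_lt_of_le h hab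
  -- cardinalities as sums of g
  have hcum : ((Finset.univ.filter (fun ℓ : Fin m => ℓ ≤ j)).biUnion S \ Z).card
      = ∑ k ∈ Finset.univ.filter (fun ℓ : Fin m => ℓ ≤ j), g k := by
    apply aux_card_eq
    intro k hk l hl
    simp only [Finset.mem_filter, Finset.mem_univ, true_and] at hk ⊢
    exact hl.trans hk
  have htot : (Finset.univ.biUnion S \ Z).card = ∑ k : Fin m, g k := by
    apply aux_card_eq
    intro k _ l _
    exact Finset.mem_univ l
  -- split total sum
  have hsplit : ∑ k : Fin m, g k
      = (∑ k ∈ Finset.univ.filter (fun ℓ : Fin m => ℓ ≤ j), g k)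
        + ∑ k ∈ Finset.univ.filter (fun ℓ : Fin m => ¬ ℓ ≤ j), g k :=
    (Finset.sum_filter_add_sum_filter_not _ _ _).symm
  set A := ∑ k ∈ Finset.univ.filter (fun ℓ : Fin m => ℓ ≤ j), g k with hA
  set B := ∑ k ∈ Finset.univ.filter (fun ℓ : Fin m => ¬ ℓ ≤ j), g k with hB
  -- card of lower filter
  have hcardle : (Finset.univ.filter (fun ℓ : Fin m => ℓ ≤ j)).card = (j : ℕ) + 1 := by
    have : Finset.univ.filter (fun ℓ : Fin m => ℓ ≤ j) = Finset.Iic j := by ext k; simp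
    rw [this, Fin.card_Iic]
  set c := (Finset.univ.filter (fun ℓ : Fin m => ¬ ℓ ≤ j)).card with hc
  have hmsum : ((j : ℕ) + 1) + c = m := by
    rw [← hcardle, hc, Finset.card_filter_add_card_filter_not, Finset.card_univ,
      Fintype.card_fin]
  have hAge : ((j : ℕ) + 1) * g j ≤ A := by
    rw [← hcardle]
    apply Finset.card_nsmul_le_sum
    intro k hk
    simp only [Finset.mem_filter, Finset.mem_univ, true_and] at hk
    exact hmono k j hk
  have hBle : B ≤ c * g j := by
    apply Finset.sum_le_card_nsmul
    intro k hk
    simp only [Finset.mem_filter, Finset.mem_univ, true_and, not_le] at hk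
    exact hmono j k hk.le
  -- finish over ℝ
  rw [ge_iff_le, hcum, htot, hsplit, div_mul_eq_mul_div, div_le_iff₀ (by positivity)]
  push_cast [← hmsum, ← hA, ← hB]
  have h1 : ((j : ℕ) + 1 : ℝ) * (g j : ℝ) ≤ (A : ℝ) := by exact_mod_cast hAge
  have h2 : (B : ℝ) ≤ (c : ℝ) * (g j : ℝ) := by exact_mod_cast hBle
  nlinarith [Nat.cast_nonneg (α := ℝ) c, Nat.cast_nonneg (α := ℝ) (g j),
    Nat.cast_nonneg (α := ℝ) ((j : ℕ) + 1)]
end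

section
/- Let a_1, ..., a_n ∈ [0,1]^d be vectors, k ≤ n a positive integer, and μ = (1/k)·∑ a_i. Suppose the vectors b_i = (k/n)·μ − a_i (which lie in [−1,1]^d and sum to 0) admit an ordering with all prefix sums of ℓ∞-norm at most ⌊3d/2⌋. Then partitioning [n] along this ordering into k consecutive blocks of sizes ⌊n/k⌋ or ⌈n/k⌉ yields sets I_1, ..., I_k with ‖μ − ∑_{i∈I_j} a_i‖_∞ < 2⌊3d/2⌋ + 1 ≤ 3d+1 for each j. -/
set_option maxHeartbeats 1600000 in
theorem stmt_14 (d n k : ℕ) (hd : 0 < d) (hk : 0 < k) (hkn : k ≤ n)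
    (a : Fin n → (Fin d → ℝ)) (hrange : ∀ i q, a i q ∈ Set.Icc (0 : ℝ) 1)
    (μ : Fin d → ℝ) (hμ : μ = (1 / (k : ℝ)) • ∑ i, a i)
    (b : Fin n → (Fin d → ℝ)) (hb : ∀ i, b i = ((k : ℝ) / n) • μ - a i)
    (π : Equiv.Perm (Fin n))
    (hpre : ∀ ℓ : ℕ, ℓ ≤ n →
      ‖∑ i ∈ Finset.univ.filter (fun i : Fin n => (i : ℕ) < ℓ), b (π i)‖ ≤ ((3 * d) / 2 : ℕ)) :
    ∃ (I : Fin k → Finset (Fin n)) (c : ℕ → ℕ),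
      Monotone c ∧ c 0 = 0 ∧ c k = n ∧
      (∀ j : Fin k, I j =
        Finset.image π (Finset.univ.filter
          (fun i : Fin n => c j ≤ (i : ℕ) ∧ (i : ℕ) < c ((j : ℕ) + 1)))) ∧
      (∀ j : Fin k, (I j).card = n / k ∨ (I j).card = (n + k - 1) / k) ∧
      (∀ j : Fin k, ‖μ - ∑ i ∈ I j, a i‖ < 2 * ((3 * d) / 2 : ℕ) + 1) ∧
      ((2 * ((3 * d) / 2 : ℕ) + 1 : ℝ) ≤ 3 * d + 1) := by
  have hn : 0 < n := hk.trans_le hkn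
  set q := n / k with hq
  set r := n % k with hr
  have hqr : k * q + r = n := Nat.div_add_mod n k
  have hrk : r < k := Nat.mod_lt n hk
  set c : ℕ → ℕ := fun j => j * q + min j r with hc
  have hstep : ∀ j : ℕ, c (j + 1) = c j + (q + if j < r then 1 else 0) := by
    intro j
    rcases Nat.lt_or_ge j r with h | h
    · simp only [hc, if_pos h, min_eq_left h.le, min_eq_left (by omega : j + 1 ≤ r)]
      ring
    · simp only [hc, if_neg (not_lt.mpr h), min_eq_right h, min_eq_right (by omega : r ≤ j + 1)]
      ring
  have hmono : Monotone c := fun x y h =>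
    Nat.add_le_add (Nat.mul_le_mul_right _ h) (min_le_min h le_rfl)
  have hc0 : c 0 = 0 := by simp [hc]
  have hck : c k = n := by
    show k * q + min k r = n
    rw [min_eq_right hrk.le]; exact hqr
  have hcle : ∀ j, j ≤ k → c j ≤ n := fun j hj => hck ▸ hmono hj
  -- cardinality of the slices
  have hcard : ∀ s e : ℕ, e ≤ n →
      (Finset.univ.filter (fun i : Fin n => s ≤ (i : ℕ) ∧ (i : ℕ) < e)).card = e - s := by
    intro s e he
    have himg : Finset.image Fin.val
        (Finset.univ.filter (fun i : Fin n => s ≤ (i : ℕ) ∧ (i : ℕ) < e)) = Finset.Ico s e := by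
      ext x
      simp only [Finset.mem_image, Finset.mem_filter, Finset.mem_univ, true_and, Finset.mem_Ico]
      constructor
      · rintro ⟨i, ⟨h1, h2⟩, rfl⟩; exact ⟨h1, h2⟩
      · rintro ⟨h1, h2⟩; exact ⟨⟨x, lt_of_lt_of_le h2 he⟩, ⟨h1, h2⟩, rfl⟩
    rw [← Nat.card_Ico s e, ← himg, Finset.card_image_of_injective _ Fin.val_injective]
  refine ⟨fun j : Fin k => Finset.image π (Finset.univ.filter
      (fun i : Fin n => c j ≤ (i : ℕ) ∧ (i : ℕ) < c ((j : ℕ) + 1))), c,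
    hmono, hc0, hck, fun j => rfl, ?_, ?_, ?_⟩
  · -- cardinalities
    intro j
    have hj1 : (j : ℕ) + 1 ≤ k := j.isLt
    have hIcard : (Finset.image π (Finset.univ.filter
        (fun i : Fin n => c j ≤ (i : ℕ) ∧ (i : ℕ) < c ((j : ℕ) + 1)))).card
        = c ((j : ℕ) + 1) - c j := by
      rw [Finset.card_image_of_injective _ π.injective, hcard _ _ (hcle _ hj1)]
    rw [hIcard, hstep, Nat.add_sub_cancel_left]
    rcases Nat.lt_or_ge (j : ℕ) r with h | h
    · right
      rw [if_pos h]
      have h1 : n + k - 1 = k * (q + 1) + (r - 1) := by rw [Nat.mul_add, Nat.mul_one]; omega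
      rw [h1, Nat.mul_add_div hk, Nat.div_eq_of_lt (by omega : r - 1 < k)]
    · left
      rw [if_neg (not_lt.mpr h), Nat.add_zero]
  · -- norm bound
    intro j
    set s := c (j : ℕ) with hs
    set e := c ((j : ℕ) + 1) with he
    have hj1 : (j : ℕ) + 1 ≤ k := j.isLt
    have hen : e ≤ n := hcle _ hj1
    have hsn : s ≤ n := hcle _ (by omega)
    have hse : s ≤ e := hmono (by omega)
    set F := Finset.univ.filter (fun i : Fin n => s ≤ (i : ℕ) ∧ (i : ℕ) < e) with hF
    set A := Finset.univ.filter (fun i : Fin n => (i : ℕ) < e) with hA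
    set B := Finset.univ.filter (fun i : Fin n => (i : ℕ) < s) with hB
    have hBA : B ⊆ A := by
      intro i hi
      simp only [hA, hB, Finset.mem_filter, Finset.mem_univ, true_and] at *
      omega
    have hsdiff : A \ B = F := by
      ext i
      simp only [hA, hB, hF, Finset.mem_sdiff, Finset.mem_filter, Finset.mem_univ, true_and]
      omega
    have hsumb : ∑ i ∈ F, b (π i) = (∑ i ∈ A, b (π i)) - (∑ i ∈ B, b (π i)) := by
      rw [eq_sub_iff_add_eq, ← hsdiff]
      exact Finset.sum_sdiff hBA
    have hsuma : ∑ i ∈ Finset.image π F, a i = ∑ i ∈ F, a (π i) :=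
      Finset.sum_image (fun x _ y _ h => π.injective h)
    have ha : ∀ i : Fin n, a i = ((k : ℝ) / n) • μ - b i := by
      intro i; rw [hb i]; abel
    have hFcard : (F.card : ℝ) = e - s := by
      rw [hF, hcard _ _ hen]
      have : (s : ℝ) ≤ e := Nat.cast_le.mpr hse
      push_cast [hse]
      ring
    have hsumaF : ∑ i ∈ F, a (π i)
        = (F.card : ℝ) • (((k : ℝ) / n) • μ) - ∑ i ∈ F, b (π i) := by
      rw [Finset.sum_congr rfl (fun i _ => ha (π i)), Finset.sum_sub_distrib,
        Finset.sum_const, ← Nat.cast_smul_eq_nsmul ℝ]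
    -- key decomposition
    have hdecomp : μ - ∑ i ∈ Finset.image π F, a i
        = (1 - (F.card : ℝ) * ((k : ℝ) / n)) • μ + ((∑ i ∈ A, b (π i)) - (∑ i ∈ B, b (π i))) := by
      rw [hsuma, hsumaF, hsumb, smul_smul, sub_smul, one_smul]
      abel
    have hnA : ‖∑ i ∈ A, b (π i)‖ ≤ ((3 * d) / 2 : ℕ) := hpre e hen
    have hnB : ‖∑ i ∈ B, b (π i)‖ ≤ ((3 * d) / 2 : ℕ) := hpre s hsn
    have hk0 : (0 : ℝ) < k := by positivity
    have hn0 : (0 : ℝ) < n := by positivity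
    have hμnorm : ‖μ‖ ≤ (n : ℝ) / k := by
      rw [hμ, pi_norm_le_iff_of_nonneg (by positivity)]
      intro p
      simp only [Pi.smul_apply, Finset.sum_apply, smul_eq_mul]
      have hs0 : (0 : ℝ) ≤ ∑ i, a i p := Finset.sum_nonneg fun i _ => (hrange i p).1
      have hsle : ∑ i, a i p ≤ (n : ℝ) := by
        calc ∑ i, a i p ≤ ∑ _i : Fin n, (1 : ℝ) :=
              Finset.sum_le_sum (fun i _ => (hrange i p).2)
          _ = n := by simp
      rw [Real.norm_eq_abs, abs_of_nonneg (by positivity)]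
      have hik : (0 : ℝ) ≤ 1 / k := by positivity
      have h2 := mul_le_mul_of_nonneg_left hsle hik
      have h3 : (1 / (k : ℝ)) * (n : ℝ) = (n : ℝ) / k := by ring
      linarith
    have habs : |1 - (F.card : ℝ) * ((k : ℝ) / n)| ≤ ((k : ℝ) - 1) / n := by
      have hcf : (F.card : ℝ) * k = e * k - s * k := by rw [hFcard]; ring
      have : (1 : ℝ) - (F.card : ℝ) * ((k : ℝ) / n) = ((n : ℝ) - F.card * k) / n := by
        field_simp
      rw [this, abs_div, abs_of_pos hn0, div_le_div_iff₀ hn0 hn0]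
      have hnr : (n : ℝ) = (k : ℝ) * q + r := by exact_mod_cast hqr.symm
      have hrk' : (r : ℝ) + 1 ≤ (k : ℝ) := by exact_mod_cast hrk
      have hmain : |(n : ℝ) - (F.card : ℝ) * k| ≤ (k : ℝ) - 1 := by
        have hFc : F.card = q + if (j : ℕ) < r then 1 else 0 := by
          rw [hF, hcard _ _ hen, he, hs, hstep, Nat.add_sub_cancel_left]
        rcases Nat.lt_or_ge (j : ℕ) r with h | h
        · rw [hFc, if_pos h]
          have hr1 : (1 : ℝ) ≤ r := by exact_mod_cast (show 1 ≤ r by omega)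
          push_cast
          rw [abs_le]
          constructor <;> linarith [hnr]
        · rw [hFc, if_neg (not_lt.mpr h)]
          have hr0 : (0 : ℝ) ≤ r := by positivity
          push_cast
          rw [abs_le]
          constructor <;> linarith [hnr]
      exact mul_le_mul_of_nonneg_right hmain hn0.le
    have hsm : ‖(1 - (F.card : ℝ) * ((k : ℝ) / n)) • μ‖ < 1 := by
      rw [norm_smul, Real.norm_eq_abs]
      have h1 : |1 - (F.card : ℝ) * ((k : ℝ) / n)| * ‖μ‖ ≤ (((k : ℝ) - 1) / n) * ((n : ℝ) / k) := by
        apply mul_le_mul habs hμnorm (norm_nonneg _)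
        exact div_nonneg (by linarith [show (1:ℝ) ≤ k from Nat.one_le_cast.mpr hk]) hn0.le
      have h2 : (((k : ℝ) - 1) / n) * ((n : ℝ) / k) = ((k : ℝ) - 1) / k := by
        field_simp
      have h3 : ((k : ℝ) - 1) / k < 1 := by
        rw [div_lt_one hk0]; linarith
      linarith
    calc ‖μ - ∑ i ∈ Finset.image π F, a i‖
        = ‖(1 - (F.card : ℝ) * ((k : ℝ) / n)) • μ + ((∑ i ∈ A, b (π i)) - (∑ i ∈ B, b (π i)))‖ := by
          rw [hdecomp]
      _ ≤ ‖(1 - (F.card : ℝ) * ((k : ℝ) / n)) • μ‖ + (‖∑ i ∈ A, b (π i)‖ + ‖∑ i ∈ B, b (π i)‖) :=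
          (norm_add_le _ _).trans (by gcongr; exact norm_sub_le _ _)
      _ < 1 + (((3 * d) / 2 : ℕ) + ((3 * d) / 2 : ℕ)) := by
          apply add_lt_add_of_lt_of_le hsm
          linarith
      _ = 2 * ((3 * d) / 2 : ℕ) + 1 := by ring
  · have h : ((2 * ((3 * d) / 2) : ℕ) : ℝ) ≤ ((3 * d : ℕ) : ℝ) := Nat.cast_le.mpr (by omega)
    push_cast at h
    linarith
end

section
/- Let G be a graph, and let D, D' be two disjoint dominating-type vertex subsets (each vertex of a set W ⊆ V(G) is dominated by both D and D', meaning each w ∈ W is in or adjacent to some vertex of D and of D'). Then there exists a minor H of G with vertex set D ∪ D' such that for every w ∈ W there is an edge (u,u') of H with u ∈ D, u' ∈ D', and w dominated by both u and u' in G. -/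
/-- `H` is a minor of `G`: each vertex of `H` is represented by a nonempty connected
branch set in `G`, branch sets are pairwise disjoint, and adjacency in `H` is
witnessed by an edge of `G` between the corresponding branch sets. -/
def IsMinorOf {α β : Type*} (H : SimpleGraph α) (G : SimpleGraph β) : Prop :=
  ∃ B : α → Set β,
    (∀ a, (B a).Nonempty) ∧
    (∀ a, ((G.induce (B a)).Connected)) ∧
    (Pairwise (Function.onFun Disjoint B)) ∧
    (∀ a a', H.Adj a a' → ∃ u ∈ B a, ∃ v ∈ B a', G.Adj u v)

lemma star_connected' {V : Type*} (G : SimpleGraph V) (a : V) (s : Set V) (ha : a ∈ s)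
    (h : ∀ v ∈ s, v = a ∨ G.Adj a v) : (G.induce s).Connected := by
  rw [SimpleGraph.connected_iff]
  have key : ∀ x : s, (G.induce s).Reachable x ⟨a, ha⟩ := by
    rintro ⟨x, hx⟩
    rcases h x hx with rfl | hadj
    · exact SimpleGraph.Reachable.refl _
    · exact SimpleGraph.Adj.reachable (by simpa using hadj.symm)
  exact ⟨fun x y => (key x).trans (key y).symm, ⟨⟨a, ha⟩⟩⟩

theorem stmt_16 {V : Type*} (G : SimpleGraph V) (D D' W : Set V)
    (hdisj : Disjoint D D')
    (hdom : ∀ w ∈ W, (∃ u ∈ D, u = w ∨ G.Adj u w) ∧ (∃ u' ∈ D', u' = w ∨ G.Adj u' w)) :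
    ∃ H : SimpleGraph ↥(D ∪ D'), IsMinorOf H G ∧
      ∀ w ∈ W, ∃ u u' : ↥(D ∪ D'), (u : V) ∈ D ∧ (u' : V) ∈ D' ∧ H.Adj u u' ∧
        ((u : V) = w ∨ G.Adj u w) ∧ ((u' : V) = w ∨ G.Adj u' w) := by
  classical
  have h1 : ∀ w ∈ W, ∃ u, u ∈ D ∧ (u = w ∨ G.Adj u w) := by
    intro w hw; obtain ⟨u, hu, h⟩ := (hdom w hw).1; exact ⟨u, hu, h⟩
  have h2 : ∀ w ∈ W, ∃ u, u ∈ D' ∧ (u = w ∨ G.Adj u w) := by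
    intro w hw; obtain ⟨u, hu, h⟩ := (hdom w hw).2; exact ⟨u, hu, h⟩
  choose! f hf hf' using h1
  choose! f' hg hg' using h2
  set g : V → V := fun w => if w ∈ D then w else f w with hgdef
  set g' : V → V := fun w => if w ∈ D' then w else f' w with hg'def
  have hgD : ∀ w ∈ W, g w ∈ D := by
    intro w hw; by_cases h : w ∈ D <;> simp [hgdef, h, hf w hw]
  have hg'D : ∀ w ∈ W, g' w ∈ D' := by
    intro w hw; by_cases h : w ∈ D' <;> simp [hg'def, h, hg w hw]
  have hgdom : ∀ w ∈ W, g w = w ∨ G.Adj (g w) w := by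
    intro w hw; by_cases h : w ∈ D <;> simp [hgdef, h, hf' w hw]
  have hg'dom : ∀ w ∈ W, g' w = w ∨ G.Adj (g' w) w := by
    intro w hw; by_cases h : w ∈ D' <;> simp [hg'def, h, hg' w hw]
  -- branch sets
  set B : ↥(D ∪ D') → Set V :=
    fun a => {(a : V)} ∪ {w | w ∈ W ∧ w ∉ D ∪ D' ∧ g w = (a : V) ∧ (a : V) ∈ D} with hB
  have hmemB : ∀ a : ↥(D ∪ D'), (a : V) ∈ B a := fun a => Or.inl rfl
  have hBadj : ∀ (a : ↥(D ∪ D')) (v : V), v ∈ B a → v = (a : V) ∨ G.Adj (a : V) v := by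
    rintro a v (hv | ⟨hvW, hvn, hvg, haD⟩)
    · exact Or.inl hv
    · right
      rcases hgdom v hvW with h | h
      · exact absurd (show v ∈ D by rw [← h, hvg]; exact haD) (fun hh => hvn (Or.inl hh))
      · exact hvg ▸ h
  -- the minor graph
  refine ⟨SimpleGraph.fromRel (fun a b => ∃ u ∈ B a, ∃ v ∈ B b, G.Adj u v), ⟨B, ?_, ?_, ?_, ?_⟩, ?_⟩
  · exact fun a => ⟨a, hmemB a⟩
  · intro a
    exact star_connected' G (a : V) (B a) (hmemB a) (hBadj a)
  · intro a b hab
    rw [Function.onFun, Set.disjoint_left]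
    rintro x (hx | ⟨hxW, hxn, hxg, haD⟩) (hy | hy)
    · exact hab (Subtype.ext (hx ▸ hy ▸ rfl))
    · exact hy.2.1 (hx ▸ a.2)
    · exact hxn (hy ▸ b.2)
    · exact hab (Subtype.ext (hxg ▸ hy.2.2.1.symm ▸ rfl))
  · intro a a' h
    rw [SimpleGraph.fromRel_adj] at h
    rcases h.2 with h | h
    · exact h
    · obtain ⟨u, hu, v, hv, huv⟩ := h; exact ⟨v, hv, u, hu, huv.symm⟩
  · intro w hw
    have huD : g w ∈ D := hgD w hw
    have hu'D : g' w ∈ D' := hg'D w hw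
    refine ⟨⟨g w, Or.inl huD⟩, ⟨g' w, Or.inr hu'D⟩, huD, hu'D, ?_, hgdom w hw, hg'dom w hw⟩
    have hne : (⟨g w, Or.inl huD⟩ : ↥(D ∪ D')) ≠ ⟨g' w, Or.inr hu'D⟩ := by
      intro h
      have := congrArg Subtype.val h
      simp only at this
      exact (Set.disjoint_left.mp hdisj huD) (this ▸ hu'D)
    rw [SimpleGraph.fromRel_adj]
    refine ⟨hne, Or.inl ?_⟩
    by_cases hwD : w ∈ D ∪ D'
    · rcases hwD with hwD | hwD'
      · -- w ∈ D, so g w = w; use edge g' w — w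
        have hgw : g w = w := by simp [hgdef, hwD]
        have : G.Adj (g' w) w := by
          rcases hg'dom w hw with h | h
          · exact absurd (h ▸ hu'D) (fun hh => Set.disjoint_left.mp hdisj hwD hh)
          · exact h
        exact ⟨g w, hmemB _, g' w, hmemB _, by rw [hgw]; exact this.symm⟩
      · have hg'w : g' w = w := by simp [hg'def, hwD']
        have : G.Adj (g w) w := by
          rcases hgdom w hw with h | h
          · exact absurd (h ▸ huD) (fun hh => Set.disjoint_left.mp hdisj hh hwD')
          · exact h
        exact ⟨g w, hmemB _, g' w, hmemB _, by rw [hg'w]; exact this⟩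
    · -- w in branch set of g w
      have hwB : w ∈ B ⟨g w, Or.inl huD⟩ := Or.inr ⟨hw, hwD, rfl, huD⟩
      have : G.Adj (g' w) w := by
        rcases hg'dom w hw with h | h
        · exact absurd (h ▸ hu'D) (fun hh => hwD (Or.inr hh))
        · exact h
      exact ⟨w, hwB, g' w, hmemB _, this.symm⟩
end
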